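/- The matrix \(\mathcal{A}_\Phi(\mathbf{u}_l,\mathbf{u}_r)=\begin{pmatrix}0&1\\-\bar u^2+q_l\bar h&2\bar u\end{pmatrix}\), where \(\bar u=(\sqrt{h_l}u_l+\sqrt{h_r}u_r)/(\sqrt{h_l}+\sqrt{h_r})\), \(\bar h=(h_l+h_r)/2\), \(u_{l}=q_l/h_l\), \(u_r=q_r/h_r\), satisfies the Roe property for the modified Shallow Water system with the piecewise-segment path: \(\mathcal{A}_\Phi(\mathbf{u}_l,\mathbf{u}_r)(\mathbf{u}_r-\mathbf{u}_l)=\big(q_r-q_l,\ \frac{q_r^2}{h_r}-\frac{q_l^2}{h_l}+q_l\frac{h_r^2-h_l^2}{2}\big)^T\). -/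

import Mathlib

open Matrix

/- The non-conservative part `q_l (h_r² - h_l²)/2` of the path integral is exactly
`q_l h̄ (h_r - h_l)`, so what remains is the classical Roe identity for the flux `q²/h`.
With `a = √h_l`, `b = √h_r` one has `ū (a + b) = a u_l + b u_r`, hence
`-ū² (b² - a²) + 2 ū (b² u_r - a² u_l) = (a u_l + b u_r)(b u_r - a u_l) = q_r²/h_r - q_l²/h_l`. -/

noncomputable def roeAverage (hl ql hr qr : ℝ) : ℝ :=
  (Real.sqrt hl * (ql / hl) + Real.sqrt hr * (qr / hr)) / (Real.sqrt hl + Real.sqrt hr)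

theorem roeAverage_flux_jump {hl hr : ℝ} (ql qr : ℝ) (hhl : 0 < hl) (hhr : 0 < hr) :
    -roeAverage hl ql hr qr ^ 2 * (hr - hl) + 2 * roeAverage hl ql hr qr * (qr - ql)
      = qr ^ 2 / hr - ql ^ 2 / hl := by
  obtain ⟨a, ha, rfl⟩ : ∃ a, 0 < a ∧ hl = a ^ 2 :=
    ⟨Real.sqrt hl, Real.sqrt_pos.mpr hhl, (Real.sq_sqrt hhl.le).symm⟩
  obtain ⟨b, hb, rfl⟩ : ∃ b, 0 < b ∧ hr = b ^ 2 :=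
    ⟨Real.sqrt hr, Real.sqrt_pos.mpr hhr, (Real.sq_sqrt hhr.le).symm⟩
  rw [roeAverage, Real.sqrt_sq ha.le, Real.sqrt_sq hb.le]
  field_simp
  ring

/-- The Roe matrix of the modified Shallow Water system satisfies the
Roe property with the piecewise-segment path:
`A_Φ(u_l,u_r) (u_r - u_l) = (q_r - q_l, q_r²/h_r - q_l²/h_l + q_l (h_r² - h_l²)/2)ᵀ`. -/
theorem modifiedSW_Roe_property (hl ql hr qr : ℝ) (hhl : 0 < hl) (hhr : 0 < hr) :
    let ul : ℝ := ql / hl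
    let ur : ℝ := qr / hr
    let ubar : ℝ := (Real.sqrt hl * ul + Real.sqrt hr * ur) / (Real.sqrt hl + Real.sqrt hr)
    let hbar : ℝ := (hl + hr) / 2
    let APhi : Matrix (Fin 2) (Fin 2) ℝ := !![0, 1; -ubar^2 + ql * hbar, 2 * ubar]
    APhi.mulVec ![hr - hl, qr - ql] =
      ![qr - ql, qr^2 / hr - ql^2 / hl + ql * (hr^2 - hl^2) / 2] := by
  intro ul ur ubar hbar APhi
  have hubar : ubar = roeAverage hl ql hr qr := rfl
  ext i
  fin_cases i
  · simp [APhi]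
  · simp only [APhi, hubar, hbar, mulVec, dotProduct, Fin.sum_univ_two, Fin.mk_one, Fin.isValue,
      of_apply, cons_val', cons_val_fin_one, cons_val_zero, cons_val_one]
    linear_combination roeAverage_flux_jump ql qr hhl hhr
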